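/- arXiv:math/0610481 — 9 statements merged into one kernel-verified Lean document; each statement's English description precedes it below -/
import Mathlib

section
/- If A and B are invertible elements of an associative unital K-algebra R satisfying B = BA⁻¹ - qA⁻¹B for some q in the ground ring K, then A and B satisfy the fundamental relation A⁻¹B⁻¹AB - B⁻¹AB = BA⁻¹B⁻¹A - A. -/
/-!
Multiplying the relation `B = B A⁻¹ - q A⁻¹ B` by `B⁻¹` on the left, resp. on the right, gives
`A⁻¹ - 1 = q B⁻¹A⁻¹B` and `BA⁻¹B⁻¹ - 1 = q A⁻¹`. Factoring the two sides of the fundamental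
relation as `(A⁻¹ - 1) B⁻¹AB` and `(BA⁻¹B⁻¹ - 1) A` then shows that both are equal to `q`.
-/

section

variable {K R : Type*} [CommSemiring K] [Ring R] [Algebra K R] {q : K} {A B : Rˣ}

theorem inv_sub_one_eq_smul_conj (h : (B : R) = B * ↑A⁻¹ - q • (↑A⁻¹ * B)) :
    ↑A⁻¹ - 1 = q • (↑B⁻¹ * ↑A⁻¹ * B : R) := by
  have h' := congrArg (↑B⁻¹ * · : R → R) h
  simp only [mul_sub, mul_smul_comm, Units.inv_mul, one_mul, ← mul_assoc] at h'
  rw [h', sub_sub_cancel]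

theorem conj_inv_sub_one_eq_smul (h : (B : R) = B * ↑A⁻¹ - q • (↑A⁻¹ * B)) :
    ↑B * ↑A⁻¹ * ↑B⁻¹ - 1 = q • (↑A⁻¹ : R) := by
  have h' := congrArg (· * ↑B⁻¹ : R → R) h
  simp only [sub_mul, smul_mul_assoc, Units.mul_inv, Units.mul_inv_cancel_right] at h'
  rw [h', sub_sub_cancel]

theorem inv_mul_conj_sub_conj_eq_smul_one (h : (B : R) = B * ↑A⁻¹ - q • (↑A⁻¹ * B)) :
    ↑A⁻¹ * ↑B⁻¹ * ↑A * ↑B - ↑B⁻¹ * ↑A * ↑B = q • (1 : R) := by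
  calc _ = (↑A⁻¹ - 1) * (↑B⁻¹ * ↑A * ↑B : R) := by noncomm_ring
    _ = q • (1 : R) := by
      rw [inv_sub_one_eq_smul_conj h, smul_mul_assoc]
      simp only [mul_assoc, Units.mul_inv_cancel_left, Units.inv_mul_cancel_left, Units.inv_mul]

theorem conj_inv_mul_sub_eq_smul_one (h : (B : R) = B * ↑A⁻¹ - q • (↑A⁻¹ * B)) :
    ↑B * ↑A⁻¹ * ↑B⁻¹ * ↑A - ↑A = q • (1 : R) := by
  calc _ = (↑B * ↑A⁻¹ * ↑B⁻¹ - 1) * (A : R) := by noncomm_ring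
    _ = q • (1 : R) := by rw [conj_inv_sub_one_eq_smul h, smul_mul_assoc, Units.inv_mul]

end

/-- If invertible elements `A, B` of an associative unital `K`-algebra `R` satisfy
`B = B A⁻¹ - q A⁻¹ B` for some `q` in the ground ring `K`, then they satisfy the
fundamental relation `A⁻¹B⁻¹AB - B⁻¹AB = BA⁻¹B⁻¹A - A`. -/
theorem fundamental_of_relation (K R : Type) [CommRing K] [Ring R] [Algebra K R]
    (q : K) (A B : Rˣ)
    (h : (B : R) = (B : R) * ((A⁻¹ : Rˣ) : R) - q • (((A⁻¹ : Rˣ) : R) * (B : R))) :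
    ((A⁻¹ : Rˣ) : R) * ((B⁻¹ : Rˣ) : R) * (A : R) * (B : R) -
        ((B⁻¹ : Rˣ) : R) * (A : R) * (B : R) =
      (B : R) * ((A⁻¹ : Rˣ) : R) * ((B⁻¹ : Rˣ) : R) * (A : R) - (A : R) := by
  rw [inv_mul_conj_sub_conj_eq_smul_one h, conj_inv_mul_sub_eq_smul_one h]
end

section
/- In the quantum Weyl algebra W_q, with A = v⁻¹u⁻¹ and B = u, the element C := A⁻¹B⁻¹A(1-A) equals q·uvu⁻¹v⁻¹u⁻¹v⁻¹u⁻¹vu, and in particular C is invertible in W_q. -/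
/-- Relations of the quantum Weyl algebra `W_q`: generators `u = 0`, `u⁻¹ = 1`,
`v = 2`, `v⁻¹ = 3`, with `u u⁻¹ = u⁻¹ u = v v⁻¹ = v⁻¹ v = 1` and `u v - q v u = 1`. -/
inductive WqRel (K : Type) [CommRing K] (q : K) :
    FreeAlgebra K (Fin 4) → FreeAlgebra K (Fin 4) → Prop
  | uui : WqRel K q (FreeAlgebra.ι K 0 * FreeAlgebra.ι K 1) 1
  | uiu : WqRel K q (FreeAlgebra.ι K 1 * FreeAlgebra.ι K 0) 1
  | vvi : WqRel K q (FreeAlgebra.ι K 2 * FreeAlgebra.ι K 3) 1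
  | viv : WqRel K q (FreeAlgebra.ι K 3 * FreeAlgebra.ι K 2) 1
  | weyl : WqRel K q (FreeAlgebra.ι K 0 * FreeAlgebra.ι K 2)
      (q • (FreeAlgebra.ι K 2 * FreeAlgebra.ι K 0) + 1)

/-- The quantum Weyl algebra `W_q`. -/
abbrev Wq (K : Type) [CommRing K] (q : K) : Type := RingQuot (WqRel K q)

/-- The invertible generator `u` of `W_q`. -/
noncomputable def Wq.u (K : Type) [CommRing K] (q : K) : (Wq K q)ˣ where
  val := RingQuot.mkAlgHom K (WqRel K q) (FreeAlgebra.ι K 0)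
  inv := RingQuot.mkAlgHom K (WqRel K q) (FreeAlgebra.ι K 1)
  val_inv := by rw [← map_mul, RingQuot.mkAlgHom_rel K WqRel.uui, map_one]
  inv_val := by rw [← map_mul, RingQuot.mkAlgHom_rel K WqRel.uiu, map_one]

/-- The invertible generator `v` of `W_q`. -/
noncomputable def Wq.v (K : Type) [CommRing K] (q : K) : (Wq K q)ˣ where
  val := RingQuot.mkAlgHom K (WqRel K q) (FreeAlgebra.ι K 2)
  inv := RingQuot.mkAlgHom K (WqRel K q) (FreeAlgebra.ι K 3)
  val_inv := by rw [← map_mul, RingQuot.mkAlgHom_rel K WqRel.vvi, map_one]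
  inv_val := by rw [← map_mul, RingQuot.mkAlgHom_rel K WqRel.viv, map_one]

/-- `A = v⁻¹ u⁻¹` as a unit of `W_q`. -/
noncomputable def Wq.A (K : Type) [CommRing K] (q : K) : (Wq K q)ˣ :=
  (Wq.v K q)⁻¹ * (Wq.u K q)⁻¹

/-- `B = u` as a unit of `W_q`. -/
noncomputable def Wq.B (K : Type) [CommRing K] (q : K) : (Wq K q)ˣ := Wq.u K q

/-
Multiplying the Weyl relation `u v = q v u + 1` on the left by `A = v⁻¹ u⁻¹` gives
`1 = q A v u + A`, i.e. `1 - A = q v⁻¹ u⁻¹ v u`. Substituting this into `C = A⁻¹ B⁻¹ A (1 - A)`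
with `A⁻¹ = u v`, `B⁻¹ = u⁻¹` yields the stated word, which is `q` times a product of units.
-/

theorem Wq.u_mul_v (K : Type) [CommRing K] (q : K) :
    (Wq.u K q : Wq K q) * Wq.v K q = q • ((Wq.v K q : Wq K q) * Wq.u K q) + 1 := by
  have h := RingQuot.mkAlgHom_rel K (WqRel.weyl (K := K) (q := q))
  rwa [map_mul, map_add, map_smul, map_mul, map_one] at h

section WeylUnits

variable {K R : Type*} [CommRing K] [Ring R] [Algebra K R] {q : K} {u v : Rˣ}

theorem one_sub_inv_mul_inv_eq_smul (h : (u : R) * v = q • ((v : R) * u) + 1) :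
    1 - ((v⁻¹ * u⁻¹ : Rˣ) : R) = q • (((v⁻¹ * u⁻¹ * v * u : Rˣ)) : R) :=
  calc 1 - ((v⁻¹ * u⁻¹ : Rˣ) : R)
      = ((v⁻¹ * u⁻¹ : Rˣ) : R) * (u * v - 1) := by
        rw [mul_sub, mul_one, ← Units.val_mul, ← Units.val_mul, ← mul_inv_rev, inv_mul_cancel,
          Units.val_one]
    _ = q • (((v⁻¹ * u⁻¹ * v * u : Rˣ)) : R) := by
        rw [h, add_sub_cancel_right, mul_smul_comm]; simp only [Units.val_mul, mul_assoc]

theorem inv_mul_inv_mul_mul_one_sub_eq_smul (h : (u : R) * v = q • ((v : R) * u) + 1) :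
    (((v⁻¹ * u⁻¹)⁻¹ : Rˣ) : R) * ((u⁻¹ : Rˣ) : R) * ((v⁻¹ * u⁻¹ : Rˣ) : R) *
        (1 - ((v⁻¹ * u⁻¹ : Rˣ) : R)) =
      q • ((u : R) * v * ((u⁻¹ : Rˣ) : R) * ((v⁻¹ : Rˣ) : R) * ((u⁻¹ : Rˣ) : R) *
        ((v⁻¹ : Rˣ) : R) * ((u⁻¹ : Rˣ) : R) * v * u) := by
  rw [one_sub_inv_mul_inv_eq_smul h, mul_smul_comm]
  simp only [mul_inv_rev, inv_inv, Units.val_mul, mul_assoc]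

theorem isUnit_smul_val [Invertible q] (w : Rˣ) : IsUnit (q • (w : R)) := by
  rw [Algebra.smul_def]
  exact ((isUnit_of_invertible q).map (algebraMap K R)).mul w.isUnit

end WeylUnits

/-- In `W_q`, with `A = v⁻¹u⁻¹`, `B = u`, the element `C = A⁻¹B⁻¹A(1-A)` equals
`q • (u v u⁻¹ v⁻¹ u⁻¹ v⁻¹ u⁻¹ v u)`; in particular `C` is invertible in `W_q`. -/
theorem wq_C_eq_and_isUnit (K : Type) [CommRing K] (q : K) [Invertible q] :
    (((Wq.A K q)⁻¹ : (Wq K q)ˣ) : Wq K q) * ((Wq.B K q)⁻¹ : (Wq K q)ˣ) *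
        (Wq.A K q : Wq K q) * (1 - (Wq.A K q : Wq K q)) =
      q • ((Wq.u K q : Wq K q) * (Wq.v K q : Wq K q) *
        ((Wq.u K q)⁻¹ : (Wq K q)ˣ) * ((Wq.v K q)⁻¹ : (Wq K q)ˣ) *
        ((Wq.u K q)⁻¹ : (Wq K q)ˣ) * ((Wq.v K q)⁻¹ : (Wq K q)ˣ) *
        ((Wq.u K q)⁻¹ : (Wq K q)ˣ) * (Wq.v K q : Wq K q) * (Wq.u K q : Wq K q)) ∧
    IsUnit ((((Wq.A K q)⁻¹ : (Wq K q)ˣ) : Wq K q) * ((Wq.B K q)⁻¹ : (Wq K q)ˣ) *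
        (Wq.A K q : Wq K q) * (1 - (Wq.A K q : Wq K q))) := by
  unfold Wq.A Wq.B
  have hC := inv_mul_inv_mul_mul_one_sub_eq_smul (Wq.u_mul_v K q)
  refine ⟨hC, hC ▸ ?_⟩
  exact isUnit_smul_val (Wq.u K q * Wq.v K q * (Wq.u K q)⁻¹ * (Wq.v K q)⁻¹ * (Wq.u K q)⁻¹ *
    (Wq.v K q)⁻¹ * (Wq.u K q)⁻¹ * Wq.v K q * Wq.u K q)
end

section
/- Let A, B be invertible elements of an associative unital ring R satisfying the fundamental relation A⁻¹B⁻¹AB - B⁻¹AB = BA⁻¹B⁻¹A - A, with C = A⁻¹B⁻¹A(1-A) and D = 1 - A⁻¹B⁻¹AB. If C is invertible, then the 2×2 matrix S = [[A, B], [C, D]] is invertible in M_2(R). -/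
/-!
Eliminating the lower-left entry against the unit `A` writes `S` as a lower unitriangular matrix
times `[[A, B], [0, D - C A⁻¹ B]]`, and the Schur complement `D - C A⁻¹ B` simplifies to `1 - A⁻¹`.
Since `C = (A⁻¹B⁻¹A)(1 - A)` with `A⁻¹B⁻¹A` a unit, `1 - A` is a unit, hence so is
`1 - A⁻¹ = -A⁻¹(1 - A)`.
-/

namespace Matrix

variable {R : Type*} [Ring R]

theorem isUnit_fin_two_lowerUnitriangular (e : R) : IsUnit !![1, 0; e, 1] :=
  ⟨⟨!![1, 0; e, 1], !![1, 0; -e, 1], by simp [one_fin_two], by simp [one_fin_two]⟩, rfl⟩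

theorem isUnit_fin_two_upperTriangular (a d : Rˣ) (b : R) : IsUnit !![(a : R), b; 0, d] :=
  ⟨⟨!![(a : R), b; 0, d], !![↑a⁻¹, -(↑a⁻¹ * b * ↑d⁻¹); 0, ↑d⁻¹],
    by simp [one_fin_two, ← mul_assoc], by simp [one_fin_two, mul_assoc]⟩, rfl⟩

theorem isUnit_fin_two_of_isUnit_schur (a : Rˣ) (b c d : R) (h : IsUnit (d - c * ↑a⁻¹ * b)) :
    IsUnit !![(a : R), b; c, d] := by
  obtain ⟨s, hs⟩ := h
  have hLU : !![(a : R), b; c, d] = !![1, 0; c * ↑a⁻¹, 1] * !![(a : R), b; 0, ↑s] := by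
    simp [hs, mul_assoc]
  rw [hLU]
  exact (isUnit_fin_two_lowerUnitriangular _).mul (isUnit_fin_two_upperTriangular a s b)

end Matrix

namespace Units

variable {R : Type*} [Ring R]

theorem isUnit_one_sub_inv (u : Rˣ) (h : IsUnit (1 - (u : R))) : IsUnit (1 - (↑u⁻¹ : R)) := by
  have hneg : 1 - (↑u⁻¹ : R) = -(↑u⁻¹ * (1 - u)) := by simp [mul_sub]
  rw [hneg]
  exact ((isUnit_units_mul u⁻¹ _).mpr h).neg

theorem schurComplement_eq_one_sub_inv (a b : Rˣ) :
    (1 - ↑a⁻¹ * ↑b⁻¹ * a * b) - ↑a⁻¹ * ↑b⁻¹ * a * (1 - a) * ↑a⁻¹ * b = 1 - (↑a⁻¹ : R) := by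
  simp [mul_sub, sub_mul, mul_assoc]

end Units

theorem S_isUnit_of_C_isUnit_general (R : Type) [Ring R] (A B : Rˣ)
    (hC : IsUnit (((A⁻¹ : Rˣ) : R) * ((B⁻¹ : Rˣ) : R) * (A : R) * (1 - (A : R)))) :
    IsUnit !![(A : R), (B : R);
       ((A⁻¹ : Rˣ) : R) * ((B⁻¹ : Rˣ) : R) * (A : R) * (1 - (A : R)),
       1 - ((A⁻¹ : Rˣ) : R) * ((B⁻¹ : Rˣ) : R) * (A : R) * (B : R)] := by
  have hA : IsUnit (1 - (A : R)) :=
    (Units.isUnit_units_mul (A⁻¹ * B⁻¹ * A) _).mp (by simpa using hC)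
  apply Matrix.isUnit_fin_two_of_isUnit_schur
  rw [Units.schurComplement_eq_one_sub_inv]
  exact A.isUnit_one_sub_inv hA

/-- For units `A, B` of a ring `R` satisfying the fundamental relation, with
`C = A⁻¹B⁻¹A(1-A)` and `D = 1 - A⁻¹B⁻¹AB`: if `C` is invertible then the matrix
`S = [[A,B],[C,D]]` is invertible in `M₂(R)`. -/
theorem S_isUnit_of_C_isUnit (R : Type) [Ring R] (A B : Rˣ)
    (hfund : ((A⁻¹ : Rˣ) : R) * ((B⁻¹ : Rˣ) : R) * (A : R) * (B : R) -
        ((B⁻¹ : Rˣ) : R) * (A : R) * (B : R) =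
      (B : R) * ((A⁻¹ : Rˣ) : R) * ((B⁻¹ : Rˣ) : R) * (A : R) - (A : R))
    (hC : IsUnit (((A⁻¹ : Rˣ) : R) * ((B⁻¹ : Rˣ) : R) * (A : R) * (1 - (A : R)))) :
    IsUnit !![(A : R), (B : R);
       ((A⁻¹ : Rˣ) : R) * ((B⁻¹ : Rˣ) : R) * (A : R) * (1 - (A : R)),
       1 - ((A⁻¹ : Rˣ) : R) * ((B⁻¹ : Rˣ) : R) * (A : R) * (B : R)] :=
  S_isUnit_of_C_isUnit_general R A B hC
end

section
/- Let A, B be invertible elements of an associative unital ring R satisfying the fundamental relation, C = A⁻¹B⁻¹A(1-A), D = 1 - A⁻¹B⁻¹AB, and let S₁ = [[A,B,0],[C,D,0],[0,0,1]] and S₂ = [[1,0,0],[0,A,B],[0,C,D]] in M₃(R). Then S₁S₂S₁ = S₂S₁S₂ (the braid relation). -/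
/-! Comparing the two triple products entry by entry, the braid relation amounts to seven
identities in `R`. Writing `u = A⁻¹B⁻¹A`, so that `C = u(1 - A)` and `D = 1 - uB`, each of them
is a two-sided linear combination of `BAu = A` and of the fundamental relation rewritten as
`A + (1 - A)uB = Bu`. -/

section
variable {R : Type*} [Ring R]

theorem braid_of_entry_identities {A B C D : R}
    (h₁₁ : A * A + B * A * C = A) (h₁₂ : A * B + B * A * D = B * A)
    (h₂₁ : C * A + D * A * C = A * C) (h₂₂ : C * B + D * A * D = A * D * A + B * C)
    (h₂₃ : D * B = A * D * B + B * D) (h₃₂ : C * D = C * D * A + D * C)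
    (h₃₃ : D = C * D * B + D * D) :
    !![A, B, 0; C, D, 0; 0, 0, 1] * !![1, 0, 0; 0, A, B; 0, C, D] *
        !![A, B, 0; C, D, 0; 0, 0, 1] =
      !![1, 0, 0; 0, A, B; 0, C, D] * !![A, B, 0; C, D, 0; 0, 0, 1] *
        !![1, 0, 0; 0, A, B; 0, C, D] := by
  simp only [Matrix.mul_fin_three, mul_zero, zero_mul, mul_one, one_mul, add_zero, zero_add]
  rw [h₁₁, h₁₂, h₂₁, h₂₂, ← h₂₃, ← h₃₂, ← h₃₃]

theorem braid_of_fundamental_relation {A B u : R} (h : B * A * u = A)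
    (k : A + (1 - A) * u * B = B * u) :
    !![A, B, 0; u * (1 - A), 1 - u * B, 0; 0, 0, 1] *
        !![1, 0, 0; 0, A, B; 0, u * (1 - A), 1 - u * B] *
        !![A, B, 0; u * (1 - A), 1 - u * B, 0; 0, 0, 1] =
      !![1, 0, 0; 0, A, B; 0, u * (1 - A), 1 - u * B] *
        !![A, B, 0; u * (1 - A), 1 - u * B, 0; 0, 0, 1] *
        !![1, 0, 0; 0, A, B; 0, u * (1 - A), 1 - u * B] := by
  apply braid_of_entry_identities
  · linear_combination (norm := noncomm_ring) h * (1 - A)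
  · linear_combination (norm := noncomm_ring) -h * B
  · linear_combination (norm := noncomm_ring) -u * h * (1 - A)
  · linear_combination (norm := noncomm_ring) u * h * B + k * (1 - A)
  · linear_combination (norm := noncomm_ring) -k * B
  · linear_combination (norm := noncomm_ring) -u * k * (1 - A)
  · linear_combination (norm := noncomm_ring) u * k * B

end

/-- For units `A, B` of a ring `R` satisfying the fundamental relation, with
`C = A⁻¹B⁻¹A(1-A)` and `D = 1 - A⁻¹B⁻¹AB`, the `3×3` matrices
`S₁ = [[A,B,0],[C,D,0],[0,0,1]]` and `S₂ = [[1,0,0],[0,A,B],[0,C,D]]`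
satisfy the braid relation `S₁S₂S₁ = S₂S₁S₂`. -/
theorem braid_relation (R : Type) [Ring R] (A B : Rˣ)
    (hfund : ((A⁻¹ : Rˣ) : R) * ((B⁻¹ : Rˣ) : R) * (A : R) * (B : R) -
        ((B⁻¹ : Rˣ) : R) * (A : R) * (B : R) =
      (B : R) * ((A⁻¹ : Rˣ) : R) * ((B⁻¹ : Rˣ) : R) * (A : R) - (A : R)) :
    (!![(A : R), (B : R), 0;
        ((A⁻¹ : Rˣ) : R) * ((B⁻¹ : Rˣ) : R) * (A : R) * (1 - (A : R)),
        1 - ((A⁻¹ : Rˣ) : R) * ((B⁻¹ : Rˣ) : R) * (A : R) * (B : R), 0;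
        0, 0, 1] *
     !![1, 0, 0;
        0, (A : R), (B : R);
        0, ((A⁻¹ : Rˣ) : R) * ((B⁻¹ : Rˣ) : R) * (A : R) * (1 - (A : R)),
        1 - ((A⁻¹ : Rˣ) : R) * ((B⁻¹ : Rˣ) : R) * (A : R) * (B : R)] *
     !![(A : R), (B : R), 0;
        ((A⁻¹ : Rˣ) : R) * ((B⁻¹ : Rˣ) : R) * (A : R) * (1 - (A : R)),
        1 - ((A⁻¹ : Rˣ) : R) * ((B⁻¹ : Rˣ) : R) * (A : R) * (B : R), 0;
        0, 0, 1]) =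
    (!![1, 0, 0;
        0, (A : R), (B : R);
        0, ((A⁻¹ : Rˣ) : R) * ((B⁻¹ : Rˣ) : R) * (A : R) * (1 - (A : R)),
        1 - ((A⁻¹ : Rˣ) : R) * ((B⁻¹ : Rˣ) : R) * (A : R) * (B : R)] *
     !![(A : R), (B : R), 0;
        ((A⁻¹ : Rˣ) : R) * ((B⁻¹ : Rˣ) : R) * (A : R) * (1 - (A : R)),
        1 - ((A⁻¹ : Rˣ) : R) * ((B⁻¹ : Rˣ) : R) * (A : R) * (B : R), 0;
        0, 0, 1] *
     !![1, 0, 0;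
        0, (A : R), (B : R);
        0, ((A⁻¹ : Rˣ) : R) * ((B⁻¹ : Rˣ) : R) * (A : R) * (1 - (A : R)),
        1 - ((A⁻¹ : Rˣ) : R) * ((B⁻¹ : Rˣ) : R) * (A : R) * (B : R)]) := by
  apply braid_of_fundamental_relation
  · simp [mul_assoc]
  · -- `hfund` with `A(A⁻¹B⁻¹A)B` in place of `B⁻¹AB`
    linear_combination (norm := noncomm_ring) hfund - A.mul_inv * (B⁻¹ : Rˣ) * A * B
end

section
/- Let A, B be invertible elements of an associative unital ring R satisfying the fundamental relation, and suppose q := (1-A)A⁻¹B⁻¹AB is a central element (an element of the ground ring). With C = A⁻¹B⁻¹A(1-A) and D = 1 - A⁻¹B⁻¹AB, the matrix S = [[A,B],[C,D]] satisfies S² = (1-q)S + q·I. -/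
/-!
With `p = A⁻¹B⁻¹A`, the matrix is `S = [[A, B], [p(1-A), 1-pB]]`, and `S - 1` is the rank-one
matrix `u vᵀ` with `u = (1, -p)`, `v = (A - 1, B)`. The fundamental relation says precisely that
`Bp = q + A`, so `vᵀu = A - 1 - Bp = -(1 + q)`. As `q` commutes with the entries of `u`, this gives
`(S - 1)² = -(1 + q)(S - 1)`, which is the quadratic relation rearranged.
-/

open Matrix

theorem Matrix.vecMulVec_mul_self {α n : Type*} [Ring α] [Fintype n] {u v : n → α} {c : α}
    (hvu : v ⬝ᵥ u = c) (hc : ∀ i, Commute c (u i)) :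
    vecMulVec u v * vecMulVec u v = c • vecMulVec u v := by
  ext i j
  rw [vecMulVec_mul_vecMulVec, hvu, smul_apply, vecMulVec_apply, vecMulVec_apply, Pi.smul_apply,
    smul_eq_mul, smul_eq_mul, ← mul_assoc, ← mul_assoc, (hc i).eq]

theorem sq_eq_of_sub_one_mul_self {R M : Type*} [Ring R] [Ring M] [Module R M] {S : M} {q : R}
    (h : (S - 1) * (S - 1) = -(1 + q) • (S - 1)) :
    S ^ 2 = (1 - q) • S + q • 1 := by
  calc S ^ 2 = (S - 1) * (S - 1) + (S - 1) + S := by noncomm_ring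
    _ = (1 - q) • S + q • 1 := by
      rw [h]
      simp only [smul_sub, sub_smul, neg_add, add_smul, neg_smul, one_smul]
      abel

theorem Matrix.fin_two_sq_eq_of_mul_eq_add {R : Type*} [Ring R] {a b p q : R}
    (hbp : b * p = q + a) (hpq : Commute p q) :
    !![a, b; p * (1 - a), 1 - p * b] ^ 2 =
      (1 - q) • !![a, b; p * (1 - a), 1 - p * b] + q • 1 := by
  have hrank : !![a, b; p * (1 - a), 1 - p * b] - 1 = vecMulVec ![1, -p] ![a - 1, b] := by
    ext i j
    fin_cases i <;> fin_cases j <;> simp [vecMulVec_apply, mul_sub, neg_add_eq_sub]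
  have hdot : ![a - 1, b] ⬝ᵥ ![1, -p] = -(1 + q) := by
    simp only [dotProduct, Fin.sum_univ_two, cons_val_zero, cons_val_one, cons_val_fin_one,
      mul_one, mul_neg, hbp]
    abel
  apply sq_eq_of_sub_one_mul_self
  rw [hrank]
  refine vecMulVec_mul_self hdot fun i => ?_
  fin_cases i
  · exact Commute.one_right _
  · exact ((Commute.one_left p).add_left hpq.symm).neg_left.neg_right

theorem Units.mul_inv_mul_inv_mul_eq_add_of_fundamental {R : Type*} [Ring R] {A B : Rˣ} {q : R}
    (hfund : ((A⁻¹ : Rˣ) : R) * ((B⁻¹ : Rˣ) : R) * (A : R) * (B : R) -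
        ((B⁻¹ : Rˣ) : R) * (A : R) * (B : R) =
      (B : R) * ((A⁻¹ : Rˣ) : R) * ((B⁻¹ : Rˣ) : R) * (A : R) - (A : R))
    (hq : q = (1 - (A : R)) * ((A⁻¹ : Rˣ) : R) * ((B⁻¹ : Rˣ) : R) * (A : R) * (B : R)) :
    (B : R) * (((A⁻¹ : Rˣ) : R) * ((B⁻¹ : Rˣ) : R) * (A : R)) = q + A := by
  have hA : (1 - (A : R)) * ((A⁻¹ : Rˣ) : R) = ((A⁻¹ : Rˣ) : R) - 1 := by
    rw [sub_mul, one_mul, Units.mul_inv]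
  have hq' : q = ((A⁻¹ : Rˣ) : R) * ((B⁻¹ : Rˣ) : R) * (A : R) * (B : R) -
      ((B⁻¹ : Rˣ) : R) * (A : R) * (B : R) := by
    rw [hq, hA]
    noncomm_ring
  rw [hq', hfund]
  noncomm_ring

/-- For units `A, B` of a ring `R` satisfying the fundamental relation, if
`q = (1-A)A⁻¹B⁻¹AB` is central, then with `C = A⁻¹B⁻¹A(1-A)`, `D = 1 - A⁻¹B⁻¹AB`,
the matrix `S = [[A,B],[C,D]]` satisfies `S² = (1-q)S + qI`. -/
theorem S_quadratic (R : Type) [Ring R] (A B : Rˣ)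
    (hfund : ((A⁻¹ : Rˣ) : R) * ((B⁻¹ : Rˣ) : R) * (A : R) * (B : R) -
        ((B⁻¹ : Rˣ) : R) * (A : R) * (B : R) =
      (B : R) * ((A⁻¹ : Rˣ) : R) * ((B⁻¹ : Rˣ) : R) * (A : R) - (A : R))
    (q : R)
    (hq : q = (1 - (A : R)) * ((A⁻¹ : Rˣ) : R) * ((B⁻¹ : Rˣ) : R) * (A : R) * (B : R))
    (hqc : ∀ r : R, Commute q r) :
    (!![(A : R), (B : R);
        ((A⁻¹ : Rˣ) : R) * ((B⁻¹ : Rˣ) : R) * (A : R) * (1 - (A : R)),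
        1 - ((A⁻¹ : Rˣ) : R) * ((B⁻¹ : Rˣ) : R) * (A : R) * (B : R)]) ^ 2 =
      (1 - q) • !![(A : R), (B : R);
        ((A⁻¹ : Rˣ) : R) * ((B⁻¹ : Rˣ) : R) * (A : R) * (1 - (A : R)),
        1 - ((A⁻¹ : Rˣ) : R) * ((B⁻¹ : Rˣ) : R) * (A : R) * (B : R)] +
      q • (1 : Matrix (Fin 2) (Fin 2) R) :=
  fin_two_sq_eq_of_mul_eq_add (Units.mul_inv_mul_inv_mul_eq_add_of_fundamental hfund hq)
    (hqc _).symm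
end

section
/- The K-algebra homomorphism β from the q-oscillator algebra W_q⁰ to the skew Laurent polynomial ring U = K(h)[x^{±1}; σ], defined by β(u) = hx⁻¹ and β(v) = x, is injective. -/
/-!
`W_q⁰` is spanned over `K` by the ordered monomials `vᵃ uᵇ`: the relation `u v = q v u + 1`
moves every `u` to the right of every `v`. Since `h x⁻¹ = x⁻¹ σ(h)`, the map `β` sends `vᵃ uᵇ`
to `σᵃ⁻ᵇ(r_b) xᵃ⁻ᵇ` with `r_b = σ(h) σ²(h) ⋯ σᵇ(h)`. As `σ` maps `h` to a polynomial of
degree one, each `σⁿ(r_b)` is a polynomial of degree `b` in `h`; so for a fixed power of `x`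
the coefficients are `K`-linearly independent, and the powers of `x` are independent over
`K(h)`. Hence `β` maps a spanning family to a linearly independent one.
-/

/-- Relation of the `q`-oscillator algebra `W_q⁰`: generators `u = 0`, `v = 1`,
with `u v - q v u = 1`. -/
inductive W0Rel (K : Type) [CommRing K] (q : K) :
    FreeAlgebra K (Fin 2) → FreeAlgebra K (Fin 2) → Prop
  | weyl : W0Rel K q (FreeAlgebra.ι K 0 * FreeAlgebra.ι K 1)
      (q • (FreeAlgebra.ι K 1 * FreeAlgebra.ι K 0) + 1)

/-- The `q`-oscillator algebra `W_q⁰`. -/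
abbrev W0 (K : Type) [CommRing K] (q : K) : Type := RingQuot (W0Rel K q)

open Function Submodule Polynomial

theorem LinearMap.injective_of_span_eq_top_of_linearIndependent {R M N ι : Type*} [Semiring R]
    [AddCommMonoid M] [Module R M] [AddCommMonoid N] [Module R N] (f : M →ₗ[R] N) {v : ι → M}
    (hv : span R (Set.range v) = ⊤) (hfv : LinearIndependent R (f ∘ v)) : Injective f := by
  have hsurj : Surjective (Finsupp.linearCombination R v) := by
    rw [← LinearMap.range_eq_top, Finsupp.range_linearCombination, hv]
  refine Injective.of_comp_right (g := Finsupp.linearCombination R v) ?_ hsurj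
  rw [← LinearMap.coe_comp, ← Finsupp.linearCombination_linear_comp]
  exact hfv

section OrderedMonomial

variable {K A : Type*} [CommSemiring K] [Semiring A] [Algebra K A]

def orderedMonomial (u v : A) (p : ℕ × ℕ) : A := v ^ p.1 * u ^ p.2

lemma mul_mem_span_range_of_forall_mul_mem {ι : Type*} {g : ι → A} {y w : A}
    (hy : ∀ i, g i * y ∈ span K (Set.range g)) (hw : w ∈ span K (Set.range g)) :
    w * y ∈ span K (Set.range g) :=
  (map_span_le (LinearMap.mulRight K y) _ _).mpr (by rintro _ ⟨i, rfl⟩; exact hy i)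
    (mem_map_of_mem hw)

variable {u v : A} {c : K}

lemma orderedMonomial_mul_u_mem_span (p : ℕ × ℕ) :
    orderedMonomial u v p * u ∈ span K (Set.range (orderedMonomial u v)) :=
  subset_span ⟨(p.1, p.2 + 1), by simp [orderedMonomial, pow_succ, mul_assoc]⟩

lemma orderedMonomial_mul_v_mem_span (huv : u * v = c • (v * u) + 1) (a b : ℕ) :
    orderedMonomial u v (a, b) * v ∈ span K (Set.range (orderedMonomial u v)) := by
  induction b with
  | zero => exact subset_span ⟨(a + 1, 0), by simp [orderedMonomial, pow_succ]⟩
  | succ b ih =>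
    have hmove : orderedMonomial u v (a, b + 1) * v =
        c • (orderedMonomial u v (a, b) * v * u) + orderedMonomial u v (a, b) := by
      simp only [orderedMonomial, pow_succ, mul_assoc, huv, mul_add, mul_smul_comm, mul_one]
    rw [hmove]
    exact add_mem
      (smul_mem _ c (mul_mem_span_range_of_forall_mul_mem orderedMonomial_mul_u_mem_span ih))
      (subset_span ⟨(a, b), rfl⟩)

lemma mem_span_orderedMonomial_of_mem_adjoin (huv : u * v = c • (v * u) + 1) {y : A}
    (hy : y ∈ Algebra.adjoin K {u, v}) : y ∈ span K (Set.range (orderedMonomial u v)) := by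
  suffices ∀ w ∈ span K (Set.range (orderedMonomial u v)),
      w * y ∈ span K (Set.range (orderedMonomial u v)) by
    simpa using this 1 (subset_span ⟨(0, 0), by simp [orderedMonomial]⟩)
  induction hy using Algebra.adjoin_induction with
  | mem z hz =>
    rcases hz with rfl | rfl
    · exact fun w => mul_mem_span_range_of_forall_mul_mem orderedMonomial_mul_u_mem_span
    · exact fun w => mul_mem_span_range_of_forall_mul_mem fun p =>
        orderedMonomial_mul_v_mem_span huv p.1 p.2
  | algebraMap r =>
    intro w hw
    rw [← Algebra.commutes, ← Algebra.smul_def]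
    exact smul_mem _ r hw
  | add y z _ _ hy hz => exact fun w hw => by rw [mul_add]; exact add_mem (hy w hw) (hz w hw)
  | mul y z _ _ hy hz => exact fun w hw => by rw [← mul_assoc]; exact hz _ (hy w hw)

end OrderedMonomial

namespace W0

variable (K : Type) [CommRing K] (q : K)

def u : W0 K q := RingQuot.mkAlgHom K (W0Rel K q) (FreeAlgebra.ι K 0)

def v : W0 K q := RingQuot.mkAlgHom K (W0Rel K q) (FreeAlgebra.ι K 1)

lemma u_mul_v : u K q * v K q = q • (v K q * u K q) + 1 := by
  simpa [u, v] using RingQuot.mkAlgHom_rel K (W0Rel.weyl (K := K) (q := q))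

lemma adjoin_u_v : Algebra.adjoin K {u K q, v K q} = ⊤ := by
  have h := congrArg (Subalgebra.map (RingQuot.mkAlgHom K (W0Rel K q)))
    (FreeAlgebra.adjoin_range_ι K (Fin 2))
  rw [AlgHom.map_adjoin, Algebra.map_top,
    (AlgHom.range_eq_top _).mpr (RingQuot.mkAlgHom_surjective K _)] at h
  rw [← h, ← Set.range_comp]
  congr
  ext w
  simp [u, v, Fin.exists_fin_two, eq_comm]

lemma span_orderedMonomial : span K (Set.range (orderedMonomial (u K q) (v K q))) = ⊤ :=
  eq_top_iff.mpr fun _ _ =>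
    mem_span_orderedMonomial_of_mem_adjoin (u_mul_v K q) (by rw [adjoin_u_v]; exact Algebra.mem_top)

end W0

section SkewLaurent

variable {K R A : Type*} [CommSemiring K] [Semiring R] [Algebra K R] [Semiring A] [Algebra K A]
  {j : R →ₐ[K] A} {σ : R ≃ₐ[K] R} {x : Aˣ}

lemma units_zpow_mul_eq (hcomm : ∀ r, (x : A) * j r = j (σ r) * x) (n : ℤ) (r : R) :
    ((x ^ n : Aˣ) : A) * j r = j ((σ ^ n) r) * ((x ^ n : Aˣ) : A) := by
  have hinv : ∀ r, SemiconjBy ((x⁻¹ : Aˣ) : A) (j r) (j (σ.symm r)) := fun r =>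
    SemiconjBy.units_inv_symm_left <| by simpa [SemiconjBy] using hcomm (σ.symm r)
  induction n using Int.induction_on generalizing r with
  | zero => simp
  | succ n ih =>
    rw [zpow_add_one, zpow_add_one, AlgEquiv.mul_apply]
    exact SemiconjBy.mul_left (ih (σ r)) (hcomm r)
  | pred n ih =>
    rw [zpow_sub_one, zpow_sub_one, AlgEquiv.mul_apply]
    exact SemiconjBy.mul_left (ih _) (hinv r)

-- `skewPowCoeff σ s b = σ(s) σ²(s) ⋯ σᵇ(s)` when `R` is commutative.
variable (σ) in
def skewPowCoeff (s : R) : ℕ → R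
  | 0 => 1
  | b + 1 => σ (skewPowCoeff s b * s)

lemma mul_units_inv_pow_eq (hcomm : ∀ r, (x : A) * j r = j (σ r) * x) (s : R) (b : ℕ) :
    (j s * ((x⁻¹ : Aˣ) : A)) ^ b =
      ((x ^ (-(b : ℤ)) : Aˣ) : A) * j (skewPowCoeff σ s b) := by
  induction b with
  | zero => simp [skewPowCoeff]
  | succ b ih =>
    have hswap : j (skewPowCoeff σ s b * s) * ((x⁻¹ : Aˣ) : A) =
        ((x⁻¹ : Aˣ) : A) * j (skewPowCoeff σ s (b + 1)) :=
      (SemiconjBy.units_inv_symm_left (hcomm _)).eq.symm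
    rw [pow_succ, ih, mul_assoc, ← mul_assoc (j _), ← map_mul, hswap, ← mul_assoc,
      ← Units.val_mul, ← zpow_neg_one, ← zpow_add, Nat.cast_succ, neg_add]

lemma map_orderedMonomial_eq {B : Type*} [Semiring B] [Algebra K B] {u v : B} (β : B →ₐ[K] A)
    (hcomm : ∀ r, (x : A) * j r = j (σ r) * x) {s : R} (hu : β u = j s * ((x⁻¹ : Aˣ) : A))
    (hv : β v = x) (p : ℕ × ℕ) :
    β (orderedMonomial u v p) =
      j ((σ ^ ((p.1 : ℤ) - p.2)) (skewPowCoeff σ s p.2)) *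
        ((x ^ ((p.1 : ℤ) - p.2) : Aˣ) : A) := by
  rw [orderedMonomial, map_mul, map_pow, map_pow, hu, hv, mul_units_inv_pow_eq hcomm,
    ← mul_assoc, ← units_zpow_mul_eq hcomm, ← Units.val_pow_eq_pow_val, ← zpow_natCast,
    ← Units.val_mul, ← zpow_add, sub_eq_add_neg]

end SkewLaurent

lemma linearIndependent_mul_zpow {K R A ι : Type*} [CommSemiring K] [Ring R] [Algebra K R]
    [Ring A] [Algebra K A] {j : R →ₐ[K] A} {x : Aˣ}
    (hindep : ∀ f : ℤ →₀ R, (f.sum fun n r => j r * ((x ^ n : Aˣ) : A)) = 0 → f = 0)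
    {n : ι → ℤ} {c : ι → R} (hc : LinearIndependent K fun i => Finsupp.single (n i) (c i)) :
    LinearIndependent K fun i => j (c i) * ((x ^ n i : Aˣ) : A) := by
  let Φ : (ℤ →₀ R) →ₗ[K] A :=
    Finsupp.lsum K fun n => LinearMap.mulRight K ((x ^ n : Aˣ) : A) ∘ₗ j.toLinearMap
  have hΦ : Injective Φ := (injective_iff_map_eq_zero Φ).mpr fun f hf =>
    hindep f (by simpa [Φ, Finsupp.lsum_apply, Function.comp_def] using hf)
  convert hc.map_injOn Φ hΦ.injOn with i
  simp [Φ]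

lemma linearIndependent_single_sub {K R : Type*} [CommSemiring K] [Semiring R] [Algebra K R]
    (σ : R ≃ₐ[K] R) {r : ℕ → R} (hr : LinearIndependent K r) :
    LinearIndependent K fun p : ℕ × ℕ =>
      Finsupp.single ((p.1 : ℤ) - p.2) ((σ ^ ((p.1 : ℤ) - p.2)) (r p.2)) := by
  have hsingle := Finsupp.linearIndependent_single (φ := fun _ : ℤ => ℕ)
    (fun n b => (σ ^ n) (r b)) fun n => hr.map_injOn (σ ^ n).toLinearMap (σ ^ n).injective.injOn
  have hinj : Injective fun p : ℕ × ℕ => (⟨(p.1 : ℤ) - p.2, p.2⟩ : Σ _ : ℤ, ℕ) := by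
    rintro ⟨a, b⟩ ⟨a', b'⟩ h
    simp only [Sigma.mk.inj_iff, heq_eq_eq] at h
    ext <;> omega
  exact (hsingle.comp _ hinj :)

section RatFuncCoefficients

variable {K : Type*} [Field K]

lemma RatFunc.map_algebraMap_eq_algebraMap_comp {F : Type*} [FunLike F (RatFunc K) (RatFunc K)]
    [AlgHomClass F K (RatFunc K) (RatFunc K)] (φ : F) {L : K[X]}
    (hφ : φ RatFunc.X = algebraMap K[X] (RatFunc K) L) (P : K[X]) :
    φ (algebraMap K[X] (RatFunc K) P) = algebraMap K[X] (RatFunc K) (P.comp L) := by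
  have haeval : ∀ Q : K[X], algebraMap K[X] (RatFunc K) Q = aeval RatFunc.X Q := fun Q => by
    rw [← RatFunc.algebraMap_X, aeval_algebraMap_apply, aeval_X_left_apply]
  rw [haeval, ← aeval_algHom_apply, hφ, aeval_algebraMap_apply, comp_eq_aeval]

variable (σ : RatFunc K ≃ₐ[K] RatFunc K) {L : K[X]}

lemma exists_degree_eq_skewPowCoeff_X (hL : L.degree = 1)
    (hσ : σ RatFunc.X = algebraMap K[X] (RatFunc K) L) (b : ℕ) :
    ∃ P : K[X], P.degree = b ∧ algebraMap K[X] (RatFunc K) P = skewPowCoeff σ RatFunc.X b := by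
  induction b with
  | zero => exact ⟨1, by simp, by simp [skewPowCoeff]⟩
  | succ b ih =>
    obtain ⟨P, hdeg, hP⟩ := ih
    refine ⟨(P * X).comp L, ?_, ?_⟩
    · rw [degree_comp (by rw [hL]; exact zero_lt_one), hL, mul_one, degree_mul_X, hdeg]
      norm_cast
    · rw [← RatFunc.map_algebraMap_eq_algebraMap_comp σ hσ, map_mul, hP, RatFunc.algebraMap_X,
        skewPowCoeff]

lemma linearIndependent_skewPowCoeff_X (hL : L.degree = 1)
    (hσ : σ RatFunc.X = algebraMap K[X] (RatFunc K) L) :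
    LinearIndependent K (skewPowCoeff σ RatFunc.X) := by
  choose P hdeg hP using exists_degree_eq_skewPowCoeff_X σ hL hσ
  rw [← funext hP]
  exact (Sequence.linearIndependent ⟨P, hdeg⟩).map_injOn
    (IsScalarTower.toAlgHom K K[X] (RatFunc K)).toLinearMap
    (RatFunc.algebraMap_injective K).injOn

end RatFuncCoefficients

/-- Let `U = K(h)[x^{±1}; σ]` be a skew Laurent polynomial ring over the rational
function field `K(h)`, where `σ(h) = q⁻¹(h-1)` (`q ≠ 0`): i.e. a `K`-algebra with an
embedding `j` of `K(h)`, an invertible `x` with `x·r = σ(r)·x`, in which the Laurent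
monomials `j(r)·xⁿ` are independent. Then the `K`-algebra homomorphism
`β : W_q⁰ → U` with `β(u) = h·x⁻¹` and `β(v) = x` is injective. -/
theorem beta_injective (K : Type) [Field K] (q : K) (hq : q ≠ 0)
    (U : Type) [Ring U] [Algebra K U]
    (j : RatFunc K →ₐ[K] U) (σ : RatFunc K ≃ₐ[K] RatFunc K)
    (hσ : σ RatFunc.X = RatFunc.C q⁻¹ * (RatFunc.X - 1))
    (x : Uˣ)
    (hcomm : ∀ r : RatFunc K, (x : U) * j r = j (σ r) * (x : U))
    (hindep : ∀ f : ℤ →₀ RatFunc K,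
      (f.sum fun n r => j r * (((x ^ n : Uˣ)) : U)) = 0 → f = 0)
    (β : W0 K q →ₐ[K] U)
    (hu : β (RingQuot.mkAlgHom K (W0Rel K q) (FreeAlgebra.ι K 0)) =
      j RatFunc.X * ((x⁻¹ : Uˣ) : U))
    (hv : β (RingQuot.mkAlgHom K (W0Rel K q) (FreeAlgebra.ι K 1)) = (x : U)) :
    Function.Injective β := by
  have hσL : σ RatFunc.X = algebraMap K[X] (RatFunc K) (C q⁻¹ * (X - C 1)) := by
    simp [hσ, RatFunc.algebraMap_C, RatFunc.algebraMap_X]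
  have hL : (C q⁻¹ * (X - C 1) : K[X]).degree = 1 := by
    rw [degree_C_mul (inv_ne_zero hq), degree_X_sub_C]
  refine β.toLinearMap.injective_of_span_eq_top_of_linearIndependent
    (W0.span_orderedMonomial K q) ?_
  convert linearIndependent_mul_zpow hindep
    (linearIndependent_single_sub σ (linearIndependent_skewPowCoeff_X σ hL hσL)) with p
  exact map_orderedMonomial_eq β hcomm hu hv p
end

section
/- Let R = K[x]/(xⁿ) where K is a field whose characteristic divides n, let I ∈ R be an element with invertible derivative I', and J ∈ R arbitrary. Define K-linear maps u, v: R → R by u(f) = f'·(I')⁻¹ + Jf and v(f) = If. Then uv - vu = id (the identity map on R). -/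
/-!
When `n = 0` in the base ring, `(Xⁿ g)' = Xⁿ g'`, so the derivative preserves the ideal `(Xⁿ)` and
descends to a derivation `D` of `K[X]/(Xⁿ)`. For any derivation `D`, the operators
`u = c·D + J` and `v = I·` satisfy `[u, v] = c·D(I)` by the Leibniz rule, and this is the identity
once `c` is the inverse of `D(I)`.
-/

open Polynomial

theorem Polynomial.derivative_mem_span_X_pow {R : Type*} [CommRing R] {n : ℕ} (hn : (n : R) = 0)
    {f : R[X]} (hf : f ∈ Ideal.span {(X : R[X]) ^ n}) :
    derivative f ∈ Ideal.span {(X : R[X]) ^ n} := by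
  obtain ⟨g, rfl⟩ := Ideal.mem_span_singleton.mp hf
  rw [derivative_mul, derivative_X_pow, hn, C_0, zero_mul, zero_mul, zero_add]
  exact Ideal.mul_mem_right _ _ (Ideal.mem_span_singleton_self _)

noncomputable def Polynomial.derivativeModXPow {R : Type*} [CommRing R] {n : ℕ}
    (hn : (n : R) = 0) : Derivation R (R[X] ⧸ Ideal.span {(X : R[X]) ^ n})
      (R[X] ⧸ Ideal.span {(X : R[X]) ^ n}) :=
  derivative'.liftOfSurjective (Ideal.Quotient.mkₐ_surjective R _) fun _ hf =>
    Ideal.Quotient.eq_zero_iff_mem.mpr <|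
      derivative_mem_span_X_pow hn (Ideal.Quotient.eq_zero_iff_mem.mp hf)

theorem Polynomial.derivativeModXPow_mk {R : Type*} [CommRing R] {n : ℕ} (hn : (n : R) = 0)
    (f : R[X]) :
    derivativeModXPow hn (Ideal.Quotient.mk _ f) = Ideal.Quotient.mk _ (derivative f) := by
  rw [derivativeModXPow]
  exact Derivation.liftOfSurjective_apply _ _ f

theorem Derivation.commutator_mulRight_comp_add_mulLeft {R A : Type*} [CommSemiring R]
    [CommRing A] [Algebra R A] (D : Derivation R A A) {a c : A} (hc : D a * c = 1) (b : A) :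
    (LinearMap.mulRight R c ∘ₗ ↑D + LinearMap.mulLeft R b) ∘ₗ LinearMap.mulLeft R a -
        LinearMap.mulLeft R a ∘ₗ (LinearMap.mulRight R c ∘ₗ ↑D + LinearMap.mulLeft R b) =
      LinearMap.id := by
  ext f
  simp only [LinearMap.sub_apply, LinearMap.comp_apply, LinearMap.add_apply,
    LinearMap.mulLeft_apply, LinearMap.mulRight_apply, Derivation.coeFn_coe, Derivation.leibniz,
    smul_eq_mul, LinearMap.id_apply]
  linear_combination f * hc

theorem truncated_weyl_rep_general (K : Type) [Field K] (p n : ℕ) [CharP K p]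
    (hpn : p ∣ n) (I J : K[X])
    (hI : IsUnit (Ideal.Quotient.mk (Ideal.span {(X : K[X]) ^ n}) (derivative I))) :
    ∃ u v : (K[X] ⧸ Ideal.span {(X : K[X]) ^ n}) →ₗ[K]
        (K[X] ⧸ Ideal.span {(X : K[X]) ^ n}),
      (∀ f : K[X], u (Ideal.Quotient.mk (Ideal.span {(X : K[X]) ^ n}) f) =
          Ideal.Quotient.mk (Ideal.span {(X : K[X]) ^ n}) (derivative f) *
              ((hI.unit⁻¹ : (K[X] ⧸ Ideal.span {(X : K[X]) ^ n})ˣ) :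
                K[X] ⧸ Ideal.span {(X : K[X]) ^ n}) +
            Ideal.Quotient.mk (Ideal.span {(X : K[X]) ^ n}) J *
              Ideal.Quotient.mk (Ideal.span {(X : K[X]) ^ n}) f) ∧
      (∀ f : K[X], v (Ideal.Quotient.mk (Ideal.span {(X : K[X]) ^ n}) f) =
          Ideal.Quotient.mk (Ideal.span {(X : K[X]) ^ n}) (I * f)) ∧
      u ∘ₗ v - v ∘ₗ u = LinearMap.id := by
  have hn : (n : K) = 0 := (CharP.cast_eq_zero_iff K p n).mpr hpn
  set D := derivativeModXPow hn
  set c : K[X] ⧸ Ideal.span {(X : K[X]) ^ n} := ↑hI.unit⁻¹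
  have hDI : D (Ideal.Quotient.mk _ I) * c = 1 := by
    rw [derivativeModXPow_mk]
    exact hI.mul_val_inv
  refine ⟨LinearMap.mulRight K c ∘ₗ ↑D + LinearMap.mulLeft K (Ideal.Quotient.mk _ J),
    LinearMap.mulLeft K (Ideal.Quotient.mk _ I), fun f => ?_, fun f => (map_mul _ I f).symm,
    ?_⟩
  · show D _ * c + _ * _ = _
    rw [derivativeModXPow_mk]
  · exact D.commutator_mulRight_comp_add_mulLeft hDI _

/-- Let `R = K[x]/(xⁿ)` with `char K = p` dividing `n`, let `I ∈ K[x]` have derivative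
invertible in `R`, and `J ∈ K[x]`. Then the `K`-linear maps `u, v : R → R` given by
`u(f) = f'·(I')⁻¹ + Jf` and `v(f) = If` are well defined and satisfy `uv - vu = id`. -/
theorem truncated_weyl_rep (K : Type) [Field K] (p n : ℕ) [CharP K p]
    (hn : 0 < n) (hpn : p ∣ n) (I J : K[X])
    (hI : IsUnit (Ideal.Quotient.mk (Ideal.span {(X : K[X]) ^ n}) (derivative I))) :
    ∃ u v : (K[X] ⧸ Ideal.span {(X : K[X]) ^ n}) →ₗ[K]
        (K[X] ⧸ Ideal.span {(X : K[X]) ^ n}),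
      (∀ f : K[X], u (Ideal.Quotient.mk (Ideal.span {(X : K[X]) ^ n}) f) =
          Ideal.Quotient.mk (Ideal.span {(X : K[X]) ^ n}) (derivative f) *
              ((hI.unit⁻¹ : (K[X] ⧸ Ideal.span {(X : K[X]) ^ n})ˣ) :
                K[X] ⧸ Ideal.span {(X : K[X]) ^ n}) +
            Ideal.Quotient.mk (Ideal.span {(X : K[X]) ^ n}) J *
              Ideal.Quotient.mk (Ideal.span {(X : K[X]) ^ n}) f) ∧
      (∀ f : K[X], v (Ideal.Quotient.mk (Ideal.span {(X : K[X]) ^ n}) f) =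
          Ideal.Quotient.mk (Ideal.span {(X : K[X]) ^ n}) (I * f)) ∧
      u ∘ₗ v - v ∘ₗ u = LinearMap.id :=
  truncated_weyl_rep_general K p n hpn I J hI
end

section
/- Let q ∈ K be invertible with q^n ≠ 1 (more precisely: assume q is not an n-th root of unity), and let u, v be invertible n×n matrices over a field K satisfying uv - qvu = 1. If v (as a linear map Kⁿ → Kⁿ) has no invariant subspaces other than 0 and Kⁿ, then u = (1-q)⁻¹v⁻¹. -/
/-!
Put `w = uv - (1 - q)⁻¹`. The relation `uv - q vu = 1` turns into `w v = q v w`, so `ker w` is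
`v`-invariant and hence `0` or everything. If it were `0`, then `w` would be invertible and taking
determinants in `w v = q v w` would give `qⁿ = 1`. Hence `w = 0`, i.e. `uv = (1 - q)⁻¹`.
-/

def QCommute {R A : Type*} [SMul R A] [Mul A] (q : R) (a b : A) : Prop :=
  a * b = q • (b * a)

theorem qCommute_mul_sub_smul_one {K A : Type*} [Field K] [Ring A] [Algebra K A] {q : K}
    (hq : q ≠ 1) {u v : A} (h : u * v - q • (v * u) = 1) :
    QCommute q (u * v - (1 - q)⁻¹ • 1) v := by
  rw [QCommute, ← sub_eq_zero]
  calc _ = (u * v - q • (v * u)) * v - ((1 - q) * (1 - q)⁻¹) • v := by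
        simp only [sub_mul, mul_sub, smul_sub, smul_mul_assoc, mul_smul_comm, one_mul, mul_one,
          mul_assoc]
        module
    _ = 0 := by rw [h, mul_inv_cancel₀ (sub_ne_zero.2 hq.symm), one_mul, one_smul, sub_self]

namespace QCommute

theorem ker_le_comap {R M : Type*} [CommSemiring R] [AddCommMonoid M] [Module R M]
    {q : R} {f g : Module.End R M} (h : QCommute q f g) :
    LinearMap.ker f ≤ (LinearMap.ker f).comap g := by
  intro x hx
  rw [LinearMap.mem_ker] at hx
  rw [Submodule.mem_comap, LinearMap.mem_ker, ← Module.End.mul_apply, h, LinearMap.smul_apply,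
    Module.End.mul_apply, hx, map_zero, smul_zero]

variable {K V : Type*} [Field K] [AddCommGroup V] [Module K V] [FiniteDimensional K V]
  {q : K} {f g : Module.End K V}

theorem not_isUnit (h : QCommute q f g) (hg : IsUnit g) (hq : q ^ Module.finrank K V ≠ 1) :
    ¬IsUnit f := by
  intro hf
  have hdet := congrArg LinearMap.det h
  rw [LinearMap.det_smul, map_mul, map_mul, mul_comm (LinearMap.det g)] at hdet
  have hne : LinearMap.det f * LinearMap.det g ≠ 0 :=
    ((LinearMap.isUnit_det f hf).mul (LinearMap.isUnit_det g hg)).ne_zero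
  exact hq (mul_right_cancel₀ hne (by rw [one_mul, ← hdet]))

theorem eq_zero_of_irreducible (h : QCommute q f g)
    (hirr : ∀ p : Submodule K V, p.map g ≤ p → p = ⊥ ∨ p = ⊤) (hg : IsUnit g)
    (hq : q ^ Module.finrank K V ≠ 1) : f = 0 := by
  rcases hirr _ (Submodule.map_le_iff_le_comap.2 h.ker_le_comap) with hbot | htop
  · exact absurd ((LinearMap.isUnit_iff_ker_eq_bot f).2 hbot) (h.not_isUnit hg hq)
  · exact LinearMap.ker_eq_top.1 htop

end QCommute

theorem u_eq_of_irreducible_general (K : Type) [Field K] (n : ℕ) (q : K)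
    (hqn : q ^ n ≠ 1)
    (u v : (Matrix (Fin n) (Fin n) K)ˣ)
    (huv : (u : Matrix (Fin n) (Fin n) K) * (v : Matrix (Fin n) (Fin n) K) -
      q • ((v : Matrix (Fin n) (Fin n) K) * (u : Matrix (Fin n) (Fin n) K)) = 1)
    (hirr : ∀ p : Submodule K (Fin n → K),
      p.map (Matrix.mulVecLin (v : Matrix (Fin n) (Fin n) K)) ≤ p → p = ⊥ ∨ p = ⊤) :
    (u : Matrix (Fin n) (Fin n) K) =
      (1 - q)⁻¹ • ((v⁻¹ : (Matrix (Fin n) (Fin n) K)ˣ) : Matrix (Fin n) (Fin n) K) := by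
  have hq : q ≠ 1 := by
    rintro rfl
    exact hqn (one_pow n)
  have hw : (u * v : Matrix (Fin n) (Fin n) K) - (1 - q)⁻¹ • 1 = 0 := by
    have hlin : QCommute q (Matrix.toLinAlgEquiv' ((u * v : Matrix (Fin n) (Fin n) K) -
        (1 - q)⁻¹ • 1)) (Matrix.toLinAlgEquiv' (v : Matrix (Fin n) (Fin n) K)) := by
      rw [QCommute, ← map_mul, ← map_mul, ← map_smul, qCommute_mul_sub_smul_one hq huv]
    apply Matrix.toLinAlgEquiv'.injective
    rw [map_zero]
    exact hlin.eq_zero_of_irreducible hirr (v.isUnit.map _) (by rwa [Module.finrank_fin_fun])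
  rw [← smul_one_mul, ← sub_eq_zero.1 hw, Units.mul_inv_cancel_right]

/-- Let `q ∈ K` with `q ≠ 1` and `q` not an `n`-th root of unity, and let `u, v` be
invertible `n×n` matrices over a field `K` with `uv - qvu = 1`. If `v`, as a linear map
`Kⁿ → Kⁿ`, has no invariant subspaces other than `0` and `Kⁿ`, then `u = (1-q)⁻¹v⁻¹`. -/
theorem u_eq_of_irreducible (K : Type) [Field K] (n : ℕ) (q : K)
    (hq1 : q ≠ 1) (hqn : q ^ n ≠ 1)
    (u v : (Matrix (Fin n) (Fin n) K)ˣ)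
    (huv : (u : Matrix (Fin n) (Fin n) K) * (v : Matrix (Fin n) (Fin n) K) -
      q • ((v : Matrix (Fin n) (Fin n) K) * (u : Matrix (Fin n) (Fin n) K)) = 1)
    (hirr : ∀ p : Submodule K (Fin n → K),
      p.map (Matrix.mulVecLin (v : Matrix (Fin n) (Fin n) K)) ≤ p → p = ⊥ ∨ p = ⊤) :
    (u : Matrix (Fin n) (Fin n) K) =
      (1 - q)⁻¹ • ((v⁻¹ : (Matrix (Fin n) (Fin n) K)ˣ) : Matrix (Fin n) (Fin n) K) :=
  u_eq_of_irreducible_general K n q hqn u v huv hirr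
end

section
/- Over the field 𝔽₂(x) of rational functions in x over 𝔽₂, let u = [[x,1],[0,x]] and v = [[1,0],[1,1]]. Then u and v are invertible and uv - vu = I (the identity 2×2 matrix), giving a representation of the extended Weyl algebra W over 𝔽₂. -/
namespace Matrix

variable {R : Type*} [CommRing R]

theorem isUnit_jordanBlock_iff (a : R) : IsUnit !![a, 1; 0, a] ↔ IsUnit a := by
  rw [isUnit_iff_isUnit_det, det_fin_two_of, mul_zero, sub_zero, isUnit_mul_self_iff]

theorem isUnit_lowerUnitriangular (b : R) : IsUnit !![1, 0; b, 1] := by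
  simp [isUnit_iff_isUnit_det, det_fin_two_of]

theorem jordanBlock_commutator (a : R) :
    !![a, 1; 0, a] * !![1, 0; 1, 1] - !![1, 0; 1, 1] * !![a, 1; 0, a] = !![1, 0; 0, -1] := by
  rw [mul_fin_two, mul_fin_two]
  ext i j
  fin_cases i <;> fin_cases j <;> simp

theorem jordanBlock_commutator_of_charTwo [CharP R 2] (a : R) :
    !![a, 1; 0, a] * !![1, 0; 1, 1] - !![1, 0; 1, 1] * !![a, 1; 0, a] = 1 := by
  rw [jordanBlock_commutator, CharTwo.neg_eq, one_fin_two]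

end Matrix

/-- Over the field `𝔽₂(x)` of rational functions over `𝔽₂`, the matrices
`u = [[x,1],[0,x]]` and `v = [[1,0],[1,1]]` are invertible and satisfy `uv - vu = 1`,
giving a representation of the extended Weyl algebra over `𝔽₂`. -/
theorem weyl_rep_char_two :
    IsUnit (!![RatFunc.X, 1; 0, RatFunc.X] : Matrix (Fin 2) (Fin 2) (RatFunc (ZMod 2))) ∧
    IsUnit (!![1, 0; 1, 1] : Matrix (Fin 2) (Fin 2) (RatFunc (ZMod 2))) ∧
    (!![RatFunc.X, 1; 0, RatFunc.X] : Matrix (Fin 2) (Fin 2) (RatFunc (ZMod 2))) *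
        !![1, 0; 1, 1] -
      !![1, 0; 1, 1] * !![RatFunc.X, 1; 0, RatFunc.X] = 1 :=
  ⟨(Matrix.isUnit_jordanBlock_iff _).2 RatFunc.X_ne_zero.isUnit,
    Matrix.isUnit_lowerUnitriangular 1, Matrix.jordanBlock_commutator_of_charTwo _⟩
end
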